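/- arXiv:1405.0500 — 2 statements merged into one kernel-verified Lean document; each statement's English description precedes it below -/
import Mathlib

section
/- In the R-pre-disambiguation construction, for any transition ((q,s), a, w, (q',s')) of the result automaton A', the underlying state set satisfies Set(s') = δ_{q'}(Set(s), a), where δ_{q'}(U, a) = δ(U, a) ∩ {p : p R q'}. -/
/-- A weighted finite automaton over alphabet `α` with weights in `S` and states `Q`:
initial states `I`, final states `F`, transitions `E ⊆ Q × Σ × S × Q`,
initial weight function `lam` and final weight function `rho`. -/
structure WFA (α S Q : Type) where
  I : Finset Q
  F : Finset Q
  E : Finset (Q × α × S × Q)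
  lam : Q → S
  rho : Q → S

namespace WFA

variable {α S Q : Type}

/-- `PathTo A p x q` holds iff there is a path in `A` from `p` to `q` labeled with `x`. -/
inductive PathTo (A : WFA α S Q) : Q → List α → Q → Prop
  | nil (q : Q) : PathTo A q [] q
  | cons {p : Q} {a : α} {w : S} {q r : Q} {x : List α} :
      (p, a, w, q) ∈ A.E → PathTo A q x r → PathTo A p (a :: x) r

/-- The common-future relation `R*`: `q` and `q'` share a common future, i.e. some
string `x` labels a path from `q` to a final state and a path from `q'` to a final state. -/
def CF (A : WFA α S Q) (q q' : Q) : Prop :=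
  ∃ x f f', f ∈ A.F ∧ f' ∈ A.F ∧ A.PathTo q x f ∧ A.PathTo q' x f'

/-- A state is accessible if reachable from some initial state. -/
def Accessible (A : WFA α S Q) (q : Q) : Prop := ∃ x i, i ∈ A.I ∧ A.PathTo i x q

/-- A state is coaccessible if some final state is reachable from it. -/
def Coaccessible (A : WFA α S Q) (q : Q) : Prop := ∃ x f, f ∈ A.F ∧ A.PathTo q x f

/-- A WFA is trim if every state is accessible and coaccessible. -/
def Trim (A : WFA α S Q) : Prop := ∀ q : Q, A.Accessible q ∧ A.Coaccessible q

/-- A relation `R` on states is compatible with the inverse transition function if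
`q R q'`, `q ∈ δ(p, x)` and `q' ∈ δ(p', x)` imply `p R p'`. -/
def Compatible (A : WFA α S Q) (R : Q → Q → Prop) : Prop :=
  ∀ p p' q q' : Q, ∀ x : List α, R q q' → A.PathTo p x q → A.PathTo p' x q' → R p p'

/-- A relation `R` is coarser than the common-future relation `R*`. -/
def Coarser (A : WFA α S Q) (R : Q → Q → Prop) : Prop :=
  ∀ q q' : Q, A.CF q q' → R q q'

/-- Admissible relations: compatible with the inverse transition function and
coarser than the common-future relation. -/
def Admissible (A : WFA α S Q) (R : Q → Q → Prop) : Prop :=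
  A.Compatible R ∧ A.Coarser R

end WFA

namespace WFA

variable {α S Q : Type} [DecidableEq Q] [DecidableEq α] [Semiring S]

/-- One-step transition function on sets of states: `δ(U, a)`. -/
def dstep (A : WFA α S Q) (U : Finset Q) (a : α) : Finset Q :=
  (A.E.filter (fun e => e.1 ∈ U ∧ e.2.1 = a)).image (fun e => e.2.2.2)

/-- `reach A U x` is `δ(U, x)`, the set of states reached from `U` by paths labeled `x`. -/
def reach (A : WFA α S Q) : Finset Q → List α → Finset Q
  | U, [] => U
  | U, a :: x => A.reach (A.dstep U a) x

/-- `W A p x V` is `W(p, x, V)`, the `⊕`-sum of the weights of all paths from `p`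
to a state of `V` labeled with `x`. -/
def W (A : WFA α S Q) : Q → List α → Finset Q → S
  | p, [], V => if p ∈ V then 1 else 0
  | p, a :: x, V =>
      ∑ e ∈ A.E.filter (fun e => e.1 = p ∧ e.2.1 = a), e.2.2.1 * A.W e.2.2.2 x V

/-- `WI A x V` is `W_I(x, V)`, including initial weights. -/
def WI (A : WFA α S Q) (x : List α) (V : Finset Q) : S :=
  ∑ i ∈ A.I, A.lam i * A.W i x V

/-- The weight `A(x)` associated by the WFA `A` to the string `x`. -/
def val (A : WFA α S Q) (x : List α) : S :=
  ∑ i ∈ A.I, A.lam i * ∑ f ∈ A.F, A.W i x {f} * A.rho f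

/-- `δ_q(I, x)`: the states of `δ(I, x)` that are in relation `R` with `q`. -/
def deltaR (A : WFA α S Q) (R : Q → Q → Prop) [DecidableRel R]
    (x : List α) (q : Q) : Finset Q :=
  (A.reach A.I x).filter (fun p => R p q)

/-- The weight component of the weighted subset `s(x, q)`: residual weights
`w_p = W_I(x, δ_q(I,x))⁻¹ ⊗ W_I(x, p)` for `p ∈ δ_q(I, x)` (and `0̄` elsewhere),
computed with the left-division operation `inv` of the weakly left divisible semiring. -/
def sfun (A : WFA α S Q) (R : Q → Q → Prop) [DecidableRel R] (inv : S → S → S)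
    (x : List α) (q : Q) : Q → S :=
  fun p => if p ∈ A.deltaR R x q then inv (A.WI x (A.deltaR R x q)) (A.WI x {p}) else 0

end WFA

/-- States of the pre-disambiguated automaton `A'`: a head state together with a
weighted subset, represented as a pair of a finite state set and a weight function. -/
abbrev QP (α S Q : Type) := Q × Finset Q × (Q → S)

namespace WFA

variable {α S Q : Type} [DecidableEq Q] [DecidableEq α] [Semiring S]

/-- The state `(q, s(x, q))` of `A'`. -/
def mkState (A : WFA α S Q) (R : Q → Q → Prop) [DecidableRel R] (inv : S → S → S)
    (x : List α) (q : Q) : QP α S Q :=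
  (q, A.deltaR R x q, A.sfun R inv x q)

/-- The states of the `R`-pre-disambiguation `A'` of `A`. -/
def IsState' (A : WFA α S Q) (R : Q → Q → Prop) [DecidableRel R] (inv : S → S → S)
    (st : QP α S Q) : Prop :=
  ∃ x : List α, st.1 ∈ A.reach A.I x ∧ st = A.mkState R inv x st.1

/-- Transitions of the `R`-pre-disambiguation `A'` of `A`: there is a transition from
`(q, s(x,q))` to `(q', s(xa,q'))` labeled `a` whenever `q' ∈ δ(q, a)`, with weight
`w = ⊕ᵢ wᵢ ⊗ W(pᵢ, a, Set(s'))`. -/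
def Estep (A : WFA α S Q) (R : Q → Q → Prop) [DecidableRel R] (inv : S → S → S)
    (st st' : QP α S Q) (a : α) (w : S) : Prop :=
  ∃ (x : List α) (q q' : Q),
    q ∈ A.reach A.I x ∧ st = A.mkState R inv x q ∧
    q' ∈ A.dstep {q} a ∧ st' = A.mkState R inv (x ++ [a]) q' ∧
    w = ∑ p ∈ st.2.1, st.2.2 p * A.W p [a] st'.2.1

/-- The initial weight function `λ'` of `A'`. -/
def lam' (A : WFA α S Q) (st : QP α S Q) : S := ∑ p ∈ st.2.1, A.lam p

/-- The final weight function `ρ'` of `A'`. -/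
def rho' (A : WFA α S Q) (st : QP α S Q) : S :=
  ∑ p ∈ st.2.1.filter (fun p => p ∈ A.F), st.2.2 p * A.rho p

/-- Paths in `A'` together with their weights. -/
inductive Path' (A : WFA α S Q) (R : Q → Q → Prop) [DecidableRel R] (inv : S → S → S) :
    QP α S Q → List α → S → QP α S Q → Prop
  | nil (st : QP α S Q) : Path' A R inv st [] 1 st
  | cons {st st' st'' : QP α S Q} {a : α} {x : List α} {w w' : S} :
      A.Estep R inv st st' a w → Path' A R inv st' x w' st'' →
      Path' A R inv st (a :: x) (w * w') st''

/-- Reachability in `A'`: `st` is reached from an initial state of `A'` by a path labeled `x`. -/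
def Reach' (A : WFA α S Q) (R : Q → Q → Prop) [DecidableRel R] (inv : S → S → S)
    (x : List α) (st : QP α S Q) : Prop :=
  ∃ q₀ ∈ A.I, ∃ w : S, Path' A R inv (A.mkState R inv [] q₀) x w st

/-- Weak left divisibility of the semiring. -/
def WeaklyLeftDivisible (S : Type) [Semiring S] : Prop :=
  ∀ x x' : S, x + x' ≠ 0 → ∃ z : S, x = (x + x') * z

/-- Cancellativity of the semiring multiplication. -/
def Cancellative (S : Type) [Semiring S] : Prop :=
  ∀ x x' z : S, z ≠ 0 → x * z = x' * z → x = x'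

/-- `inv` is a left-division operation: `inv d w` is a `z` with `w = d ⊗ z` whenever
such a factorization exists. -/
def IsLeftDiv (S : Type) [Semiring S] (inv : S → S → S) : Prop :=
  ∀ d w : S, (∃ z : S, w = d * z) → w = d * inv d w

end WFA

namespace WFA

variable {α S Q : Type} [DecidableEq Q] [DecidableEq α] [Semiring S]

lemma mem_dstep {A : WFA α S Q} {U : Finset Q} {a : α} {p : Q} :
    p ∈ A.dstep U a ↔ ∃ e ∈ A.E, e.1 ∈ U ∧ e.2.1 = a ∧ e.2.2.2 = p := by
  constructor
  · intro hp
    obtain ⟨e, he, hpe⟩ := Finset.mem_image.mp hp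
    obtain ⟨he1, he2, he3⟩ := Finset.mem_filter.mp he
    exact ⟨e, he1, he2, he3, hpe⟩
  · rintro ⟨e, he, h1, h2, h3⟩
    exact Finset.mem_image.mpr ⟨e, Finset.mem_filter.mpr ⟨he, h1, h2⟩, h3⟩

lemma reach_append_singleton (A : WFA α S Q) (x : List α) (a : α) (U : Finset Q) :
    A.reach U (x ++ [a]) = A.dstep (A.reach U x) a := by
  induction x generalizing U with
  | nil => rfl
  | cons b y ih => simp [reach, ih]

end WFA

/-- In the `R`-pre-disambiguation construction, for any transition
`((q,s), a, w, (q',s'))` of the result automaton `A'`, the underlying state sets satisfy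
`Set(s') = δ_{q'}(Set(s), a) = δ(Set(s), a) ∩ {p : p R q'}`. -/
theorem predisambiguation_transition_sets {α S Q : Type}
    [DecidableEq Q] [DecidableEq α] [Semiring S]
    (A : WFA α S Q) (R : Q → Q → Prop) [DecidableRel R] (inv : S → S → S)
    (hAdm : A.Admissible R)
    (hwld : WFA.WeaklyLeftDivisible S) (hcanc : WFA.Cancellative S)
    (hinv : WFA.IsLeftDiv S inv)
    (st st' : QP α S Q) (a : α) (w : S) (h : A.Estep R inv st st' a w) :
    st'.2.1 = (A.dstep st.2.1 a).filter (fun p => R p st'.1) := by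
  obtain ⟨x, q, q', hq, hst, hq', hst', -⟩ := h
  subst hst; subst hst'
  simp only [WFA.mkState, WFA.deltaR]
  rw [A.reach_append_singleton]
  ext p
  rw [Finset.mem_filter]; erw [Finset.mem_filter]
  constructor
  · rintro ⟨hp, hRp⟩
    refine ⟨?_, hRp⟩
    obtain ⟨e, he, he1, he2, he3⟩ := WFA.mem_dstep.mp hp
    refine WFA.mem_dstep.mpr ⟨e, he, ?_, he2, he3⟩
    refine Finset.mem_filter.mpr ⟨he1, ?_⟩
    -- need R e.1 q from R p q', edge e : e.1 →a→ p, edge q →a→ q'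
    obtain ⟨e', he', hq1, ha', hq'2⟩ := WFA.mem_dstep.mp hq'
    have hq1 : e'.1 = q := by simpa using hq1
    apply hAdm.1 e.1 q p q' [a] hRp
    · obtain ⟨p1, a1, w1, p2⟩ := e
      cases he2; cases he3
      exact WFA.PathTo.cons he (WFA.PathTo.nil _)
    · obtain ⟨p1, a1, w1, p2⟩ := e'
      cases ha'; cases hq'2; cases hq1
      exact WFA.PathTo.cons he' (WFA.PathTo.nil _)
  · rintro ⟨hp, hRp⟩
    refine ⟨?_, hRp⟩
    obtain ⟨e, he, he1, he2, he3⟩ := WFA.mem_dstep.mp hp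
    exact WFA.mem_dstep.mpr ⟨e, he, (Finset.mem_filter.mp he1).1, he2, he3⟩
end

section
/- For any n ≥ 1, the language L = {(a+b)^{k−1} b (a+b)^{n−k} c a^k : 1 ≤ k ≤ n} over alphabet {a,b,c} is accepted by an unambiguous nondeterministic finite automaton with O(n²) states, but every deterministic finite automaton accepting L has at least 2^n states. -/
/-- The language `L = {(a+b)^{k−1} b (a+b)^{n−k} c a^k : 1 ≤ k ≤ n}` over the alphabet
`{a, b, c}` encoded as `Fin 3` with `a = 0`, `b = 1`, `c = 2`: the strings
`w · c · a^k` with `w ∈ {a,b}^n`, `1 ≤ k ≤ n` and the `k`-th letter of `w` equal to `b`. -/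
def LangL (n : ℕ) : Set (List (Fin 3)) :=
  {x | ∃ (w : List (Fin 3)) (k : ℕ),
    x = w ++ 2 :: List.replicate k 0 ∧ w.length = n ∧
    (∀ c ∈ w, c = 0 ∨ c = 1) ∧ 1 ≤ k ∧ k ≤ n ∧ w[k - 1]? = some 1}

/-- A run of an NFA from state `q` on input `x`, recorded as the list of subsequent states. -/
inductive NFA.Run {α σ : Type*} (M : NFA α σ) : σ → List α → List σ → Prop
  | nil (q : σ) : NFA.Run M q [] []
  | cons {q q' : σ} {a : α} {x : List α} {l : List σ} :
      q' ∈ M.step q a → NFA.Run M q' x l → NFA.Run M q (a :: x) (q' :: l)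

/-- An NFA is unambiguous if every string admits at most one accepting run. -/
def NFA.Unambiguous {α σ : Type*} (M : NFA α σ) : Prop :=
  ∀ (x : List α) (q₀ q₀' : σ) (l l' : List σ),
    q₀ ∈ M.start → q₀' ∈ M.start →
    M.Run q₀ x l → M.Run q₀' x l' →
    (q₀ :: l).getLast (List.cons_ne_nil _ _) ∈ M.accept →
    (q₀' :: l').getLast (List.cons_ne_nil _ _) ∈ M.accept →
    q₀ = q₀' ∧ l = l'

abbrev UfaSt (n : ℕ) := (Fin (n+1) × Fin (n+1)) ⊕ Fin (n+1)

def ufa (n : ℕ) : NFA (Fin 3) (UfaSt n) where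
  step q a :=
    match q with
    | Sum.inl (k, i) =>
      if h : (i : ℕ) < n then
        if a = 2 ∨ (a = 0 ∧ (i : ℕ) + 1 = (k : ℕ)) then ∅
        else {Sum.inl (k, ⟨(i : ℕ) + 1, by omega⟩)}
      else if a = 2 then {Sum.inr k} else ∅
    | Sum.inr j =>
      if a = 0 ∧ 1 ≤ (j : ℕ) then {Sum.inr ⟨(j : ℕ) - 1, by have := j.isLt; omega⟩}
      else ∅
  start := {q | ∃ k : Fin (n+1), 1 ≤ (k : ℕ) ∧ q = Sum.inl (k, 0)}
  accept := {Sum.inr 0}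

lemma ufa_step_subsingleton (n : ℕ) (q : UfaSt n) (a : Fin 3) :
    ∀ p p', p ∈ (ufa n).step q a → p' ∈ (ufa n).step q a → p = p' := by
  intro p p' hp hp'
  rcases q with ⟨k, i⟩ | j <;> simp only [ufa] at hp hp' <;>
    split_ifs at hp hp' <;> simp_all

def UAcc (n : ℕ) (q : UfaSt n) (x : List (Fin 3)) : Prop :=
  ∃ l, (ufa n).Run q x l ∧ (q :: l).getLast (List.cons_ne_nil _ _) ∈ (ufa n).accept

lemma uacc_nil {n : ℕ} {q : UfaSt n} : UAcc n q [] ↔ q ∈ (ufa n).accept := by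
  constructor
  · rintro ⟨l, hr, hl⟩; cases hr; simpa using hl
  · intro h; exact ⟨[], NFA.Run.nil q, by simpa using h⟩

lemma uacc_cons {n : ℕ} {q : UfaSt n} {a : Fin 3} {x : List (Fin 3)} :
    UAcc n q (a :: x) ↔ ∃ q' ∈ (ufa n).step q a, UAcc n q' x := by
  constructor
  · rintro ⟨l, hr, hl⟩
    cases hr with
    | cons hstep hrun =>
      rename_i q' l'
      refine ⟨q', hstep, l', hrun, ?_⟩
      rwa [List.getLast_cons (List.cons_ne_nil _ _)] at hl
  · rintro ⟨q', hstep, l, hr, hl⟩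
    exact ⟨q' :: l, NFA.Run.cons hstep hr,
      by rwa [List.getLast_cons (List.cons_ne_nil _ _)]⟩

lemma mem_evalFrom_iff_run {α σ : Type*} (M : NFA α σ) :
    ∀ (x : List α) (S : Set σ) (p : σ),
    p ∈ M.evalFrom S x ↔ ∃ q ∈ S, ∃ l, M.Run q x l ∧
      (q :: l).getLast (List.cons_ne_nil _ _) = p := by
  intro x
  induction x with
  | nil =>
    intro S p
    simp only [NFA.evalFrom_nil]
    constructor
    · intro h; exact ⟨p, h, [], NFA.Run.nil p, rfl⟩
    · rintro ⟨q, hq, l, hr, hl⟩; cases hr; simpa using hl ▸ hq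
  | cons a x ih =>
    intro S p
    have : M.evalFrom S (a :: x) = M.evalFrom (M.stepSet S a) x := rfl
    rw [this, ih]
    constructor
    · rintro ⟨q', hq', l, hr, hl⟩
      rw [NFA.mem_stepSet] at hq'
      obtain ⟨q, hq, hstep⟩ := hq'
      exact ⟨q, hq, q' :: l, NFA.Run.cons hstep hr,
        by rwa [List.getLast_cons (List.cons_ne_nil _ _)]⟩
    · rintro ⟨q, hq, l, hr, hl⟩
      cases hr with
      | cons hstep hrun =>
        rename_i q' l'
        refine ⟨q', (NFA.mem_stepSet).2 ⟨q, hq, hstep⟩, l', hrun, ?_⟩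
        rwa [List.getLast_cons (List.cons_ne_nil _ _)] at hl

lemma run_unique (n : ℕ) :
    ∀ (x : List (Fin 3)) (q : UfaSt n) (l l' : List (UfaSt n)),
    (ufa n).Run q x l → (ufa n).Run q x l' → l = l' := by
  intro x
  induction x with
  | nil => intro q l l' h h'; cases h; cases h'; rfl
  | cons a x ih =>
    intro q l l' h h'
    cases h with
    | cons h1 h2 =>
      cases h' with
      | cons h1' h2' =>
        obtain rfl := ufa_step_subsingleton n q a _ _ h1 h1'
        rw [ih _ _ _ h2 h2']

lemma uacc_inr (n : ℕ) :
    ∀ (x : List (Fin 3)) (j : Fin (n+1)),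
    UAcc n (Sum.inr j) x ↔ x = List.replicate (j : ℕ) 0 := by
  intro x
  induction x with
  | nil =>
    intro j
    rw [uacc_nil]
    simp only [ufa, Set.mem_singleton_iff]
    constructor
    · intro h
      have hj : j = 0 := by simpa using h
      simp [hj]
    · intro h
      have hj : (j : ℕ) = 0 := by
        have := congrArg List.length h; simpa using this.symm
      exact congrArg Sum.inr (Fin.ext (by simpa using hj))
  | cons a x ih =>
    intro j
    rw [uacc_cons]
    constructor
    · rintro ⟨q', hq', hacc⟩
      simp only [ufa] at hq'
      split_ifs at hq' with hcond
      · simp only [Set.mem_singleton_iff] at hq'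
        subst hq'
        rw [ih] at hacc
        obtain ⟨rfl, hj⟩ := hcond
        have hj' : (j : ℕ) = ((j : ℕ) - 1) + 1 := by omega
        rw [hj', List.replicate_succ]
        simp [hacc]
      · simp at hq'
    · intro h
      have hj : 1 ≤ (j : ℕ) := by
        by_contra hc
        have : (j : ℕ) = 0 := by omega
        rw [this] at h; simp at h
      have ha : a = 0 ∧ x = List.replicate ((j : ℕ) - 1) 0 := by
        have hj' : (j : ℕ) = ((j : ℕ) - 1) + 1 := by omega
        rw [hj', List.replicate_succ] at h
        exact ⟨List.head_eq_of_cons_eq h, List.tail_eq_of_cons_eq h⟩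
      refine ⟨Sum.inr ⟨(j : ℕ) - 1, by have := j.isLt; omega⟩, ?_, ?_⟩
      · simp [ufa, ha.1, hj]
      · rw [ih]; exact ha.2

lemma fin3_cases : ∀ b : Fin 3, b ≠ 2 → b = 0 ∨ b = 1 := by decide
lemma fin3_one : ∀ b : Fin 3, b ≠ 2 → b ≠ 0 → b = 1 := by decide

lemma uacc_inl (n : ℕ) :
    ∀ (x : List (Fin 3)) (k i : Fin (n+1)),
    UAcc n (Sum.inl (k, i)) x ↔
      ∃ w : List (Fin 3), x = w ++ 2 :: List.replicate (k : ℕ) 0 ∧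
        w.length = n - (i : ℕ) ∧ (∀ c ∈ w, c = 0 ∨ c = 1) ∧
        ((i : ℕ) < (k : ℕ) → w[(k : ℕ) - 1 - (i : ℕ)]? = some 1) := by
  intro x
  induction x with
  | nil =>
    intro k i
    rw [uacc_nil]
    constructor
    · intro h; simp only [ufa, Set.mem_singleton_iff] at h; simp at h
    · rintro ⟨w, hx, -⟩; simp at hx
  | cons a x ih =>
    intro k i
    rw [uacc_cons]
    by_cases hin : (i : ℕ) < n
    · have hstep : (ufa n).step (Sum.inl (k, i)) a =
        if a = 2 ∨ (a = 0 ∧ (i : ℕ) + 1 = (k : ℕ)) then ∅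
        else {Sum.inl (k, ⟨(i : ℕ) + 1, by omega⟩)} := by
        simp only [ufa]; rw [dif_pos hin]
      by_cases hforbid : a = 2 ∨ (a = 0 ∧ (i : ℕ) + 1 = (k : ℕ))
      · rw [hstep, if_pos hforbid]
        simp only [Set.mem_empty_iff_false, false_and, exists_const]
        constructor
        · intro h; exact h.elim
        · rintro ⟨w, hx, hlen, hent, hget⟩
          have hw : w ≠ [] := by
            intro hc; rw [hc] at hlen; simp at hlen; omega
          obtain ⟨c, w', rfl⟩ := List.exists_cons_of_ne_nil hw
          have hac : a = c := by simpa using congrArg (·.head?) hx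
          have hc2 : c ≠ 2 := by
            rcases hent c (by simp) with h | h <;> simp [h]
          rcases hforbid with h2 | ⟨h0, hik⟩
          · exact hc2 (hac ▸ h2)
          · have hik' : (i : ℕ) < (k : ℕ) := by omega
            have := hget hik'
            rw [show (k : ℕ) - 1 - (i : ℕ) = 0 by omega] at this
            simp only [List.getElem?_cons_zero, Option.some.injEq] at this
            rw [hac, this] at h0
            exact absurd h0 (by decide)
      · rw [hstep, if_neg hforbid]
        push_neg at hforbid
        obtain ⟨ha2, hak⟩ := hforbid
        simp only [Set.mem_singleton_iff, exists_eq_left]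
        rw [ih]
        simp only [Fin.val_mk]
        constructor
        · rintro ⟨w', hx, hlen, hent, hget⟩
          refine ⟨a :: w', by simp [hx], by simp; omega, ?_, ?_⟩
          · intro c hc
            rcases List.mem_cons.mp hc with rfl | hc
            · exact fin3_cases _ ha2
            · exact hent c hc
          · intro hik
            by_cases hik1 : (i : ℕ) + 1 < (k : ℕ)
            · rw [show (k : ℕ) - 1 - (i : ℕ) = ((k : ℕ) - 1 - ((i : ℕ) + 1)) + 1
                by omega]
              simpa using hget hik1
            · have hk : (i : ℕ) + 1 = (k : ℕ) := by omega
              rw [show (k : ℕ) - 1 - (i : ℕ) = 0 by omega]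
              simp only [List.getElem?_cons_zero, Option.some.injEq]
              exact fin3_one a ha2 (fun hc => hak hc hk)
        · rintro ⟨w, hx, hlen, hent, hget⟩
          have hw : w ≠ [] := by
            intro hc; rw [hc] at hlen; simp at hlen; omega
          obtain ⟨c, w', rfl⟩ := List.exists_cons_of_ne_nil hw
          have hac : a = c := by simpa using congrArg (·.head?) hx
          subst hac
          have hx' : x = w' ++ 2 :: List.replicate (k : ℕ) 0 := by
            simpa using congrArg (·.tail) hx
          refine ⟨w', hx', by simp at hlen; omega, fun c hc => hent c (by simp [hc]), ?_⟩
          intro hik1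
          have := hget (by omega)
          rw [show (k : ℕ) - 1 - (i : ℕ) = ((k : ℕ) - 1 - ((i : ℕ) + 1)) + 1
            by omega] at this
          simpa using this
    · have hi : (i : ℕ) = n := by have := i.isLt; omega
      have hkn : (k : ℕ) ≤ n := by have := k.isLt; omega
      have hstep : (ufa n).step (Sum.inl (k, i)) a =
          if a = 2 then {Sum.inr k} else ∅ := by
        simp only [ufa]; rw [dif_neg hin]
      rw [hstep]
      by_cases ha : a = 2
      · rw [if_pos ha]
        simp only [Set.mem_singleton_iff, exists_eq_left]
        rw [uacc_inr]
        constructor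
        · intro h
          refine ⟨[], by simp [ha, h], by simp [hi], by simp, ?_⟩
          intro hik; omega
        · rintro ⟨w, hx, hlen, -, -⟩
          have hw : w = [] := by
            rw [hi] at hlen; simpa using hlen
          subst hw
          simpa using congrArg (·.tail) hx
      · rw [if_neg ha]
        simp only [Set.mem_empty_iff_false, false_and, exists_const]
        constructor
        · intro h; exact h.elim
        · rintro ⟨w, hx, hlen, hent, -⟩
          have hw : w = [] := by
            rw [hi] at hlen; simpa using hlen
          subst hw
          exact ha (by simpa using congrArg (·.head?) hx)

lemma ufa_accepts (n : ℕ) (x : List (Fin 3)) :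
    x ∈ (ufa n).accepts ↔ x ∈ LangL n := by
  rw [NFA.mem_accepts]
  constructor
  · rintro ⟨p, hp, hev⟩
    rw [mem_evalFrom_iff_run] at hev
    obtain ⟨q, hq, l, hr, hl⟩ := hev
    obtain ⟨k, hk1, rfl⟩ := hq
    have hacc : UAcc n (Sum.inl (k, 0)) x := ⟨l, hr, hl ▸ hp⟩
    rw [uacc_inl] at hacc
    obtain ⟨w, hx, hlen, hent, hget⟩ := hacc
    refine ⟨w, (k : ℕ), hx, by simpa using hlen, hent, hk1, by have := k.isLt; omega, ?_⟩
    simpa using hget (by simp only [Fin.val_zero]; omega)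
  · rintro ⟨w, k, rfl, hlen, hent, hk1, hk2, hget⟩
    have hacc : UAcc n (Sum.inl ((⟨k, by omega⟩ : Fin (n+1)), 0))
        (w ++ 2 :: List.replicate k 0) := by
      rw [uacc_inl]
      exact ⟨w, rfl, by simpa using hlen, hent, fun _ => by simpa using hget⟩
    obtain ⟨l, hr, hl⟩ := hacc
    refine ⟨_, hl, ?_⟩
    rw [mem_evalFrom_iff_run]
    exact ⟨_, ⟨⟨k, by omega⟩, by simpa using hk1, rfl⟩, l, hr, rfl⟩

lemma ufa_unambiguous (n : ℕ) : (ufa n).Unambiguous := by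
  intro x q0 q0' l l' hs hs' hr hr' ha ha'
  obtain ⟨k, hk1, rfl⟩ := hs
  obtain ⟨k', hk1', rfl⟩ := hs'
  have h1 : UAcc n (Sum.inl (k, 0)) x := ⟨l, hr, ha⟩
  have h2 : UAcc n (Sum.inl (k', 0)) x := ⟨l', hr', ha'⟩
  rw [uacc_inl] at h1 h2
  obtain ⟨w, hx, hlen, -, -⟩ := h1
  obtain ⟨w', hx', hlen', -, -⟩ := h2
  have hkk : k = k' := by
    apply Fin.ext
    have e1 := congrArg List.length hx
    have e2 := congrArg List.length hx'
    simp at e1 e2 hlen hlen'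
    omega
  subst hkk
  exact ⟨rfl, run_unique n x _ l l' hr hr'⟩

lemma mem_LangL_append (n k : ℕ) (w : List (Fin 3)) (hlen : w.length = n)
    (hent : ∀ c ∈ w, c = 0 ∨ c = 1) (hk1 : 1 ≤ k) (hk2 : k ≤ n) :
    w ++ 2 :: List.replicate k 0 ∈ LangL n ↔ w[k - 1]? = some 1 := by
  constructor
  · rintro ⟨w'', k'', hx, hlen'', -, -, -, hget''⟩
    obtain ⟨he, htail⟩ := List.append_inj hx (by omega)
    have hkk : k = k'' := by
      have := congrArg List.length htail; simpa using this
    rw [← he, ← hkk] at hget''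
    exact hget''
  · intro h
    exact ⟨w, k, rfl, hlen, hent, hk1, hk2, h⟩

lemma cast2_cases : ∀ v : Fin 2, (Fin.castLE (by omega) v : Fin 3) = 0 ∨
    (Fin.castLE (by omega) v : Fin 3) = 1 := by decide

lemma cast2_eq_one : ∀ v : Fin 2, ((Fin.castLE (by omega) v : Fin 3) = 1 ↔ v = 1) := by decide

lemma fin2_ne : ∀ u v : Fin 2, u ≠ v → (u = 1 ↔ ¬ v = 1) := by decide


/-- For any `n ≥ 1`, the language
`L = {(a+b)^{k−1} b (a+b)^{n−k} c a^k : 1 ≤ k ≤ n}` is accepted by an unambiguous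
nondeterministic finite automaton with `O(n²)` states, but every deterministic finite
automaton accepting `L` has at least `2^n` states. -/
theorem unambiguous_small_det_large :
    ∃ C : ℕ, ∀ n : ℕ, 1 ≤ n →
      (∃ (σ : Type) (_ : Fintype σ) (M : NFA (Fin 3) σ),
        Fintype.card σ ≤ C * n ^ 2 ∧
        (∀ x : List (Fin 3), x ∈ M.accepts ↔ x ∈ LangL n) ∧
        M.Unambiguous) ∧
      (∀ (σ : Type) (_ : Fintype σ) (D : DFA (Fin 3) σ),
        (∀ x : List (Fin 3), x ∈ D.accepts ↔ x ∈ LangL n) →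
        2 ^ n ≤ Fintype.card σ) := by
  refine ⟨6, fun n hn => ⟨?_, ?_⟩⟩
  · refine ⟨UfaSt n, inferInstance, ufa n, ?_, ufa_accepts n, ufa_unambiguous n⟩
    have hcard : Fintype.card (UfaSt n) = (n+1) * (n+1) + (n+1) := by simp
    rw [hcard]
    nlinarith
  · intro σ _ D hD
    have key : Function.Injective
        (fun g : Fin n → Fin 2 =>
          D.evalFrom D.start (List.ofFn fun i => (Fin.castLE (by omega) (g i) : Fin 3))) := by
      intro g g' hgg
      by_contra hne
      obtain ⟨idx, hidx⟩ : ∃ idx, g idx ≠ g' idx := by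
        by_contra hc; push_neg at hc; exact hne (funext hc)
      have hofn : ∀ (v : Fin n → Fin 2),
          (List.ofFn fun i => (Fin.castLE (by omega) (v i) : Fin 3))[(idx : ℕ)]? =
            some (Fin.castLE (by omega) (v idx)) := by
        intro v
        rw [List.getElem?_ofFn]
        simp [idx.isLt]
      have hmem : ∀ (v : Fin n → Fin 2),
          ((List.ofFn fun i => (Fin.castLE (by omega) (v i) : Fin 3)) ++
            2 :: List.replicate ((idx : ℕ) + 1) 0 ∈ LangL n) ↔ v idx = 1 := by
        intro v
        rw [mem_LangL_append n ((idx : ℕ) + 1) _ (by simp)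
          (by
            intro c hc
            simp only [List.mem_ofFn] at hc
            obtain ⟨i, rfl⟩ := hc
            exact cast2_cases (v i))
          (by omega) (by have := idx.isLt; omega)]
        rw [show (idx : ℕ) + 1 - 1 = (idx : ℕ) by omega, hofn v]
        simp only [Option.some.injEq]
        exact cast2_eq_one (v idx)
      have hacc : ∀ (v : Fin n → Fin 2),
          ((List.ofFn fun i => (Fin.castLE (by omega) (v i) : Fin 3)) ++
            2 :: List.replicate ((idx : ℕ) + 1) 0 ∈ D.accepts) ↔ v idx = 1 := by
        intro v; rw [hD, hmem]
      have heq : ∀ y : List (Fin 3),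
          ((List.ofFn fun i => (Fin.castLE (by omega) (g i) : Fin 3)) ++ y ∈ D.accepts ↔
           (List.ofFn fun i => (Fin.castLE (by omega) (g' i) : Fin 3)) ++ y ∈ D.accepts) := by
        intro y
        rw [DFA.mem_accepts, DFA.mem_accepts,
          show D.eval = D.evalFrom D.start from rfl,
          DFA.evalFrom_of_append, DFA.evalFrom_of_append]
        simp only at hgg
        rw [hgg]
      have h1 := (hacc g).symm.trans ((heq _).trans (hacc g'))
      have h2 := fin2_ne _ _ hidx
      tauto
    calc 2 ^ n = Fintype.card (Fin n → Fin 2) := by simp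
      _ ≤ Fintype.card σ := Fintype.card_le_of_injective _ key
end
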